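/- arXiv:1802.08070 — 2 statements merged into one kernel-verified Lean document; each statement's English description precedes it below -/
import Mathlib

section
/- Let A be an fg-iterative H-algebra and (X, e) an lfg coalgebra. Then there exists a unique coalgebra-to-algebra morphism u : X → A satisfying u = α ∘ Hu ∘ e. -/
/-!
Uniqueness: every morphism from a finitely presentable object into `X.V` factors through a
coalgebra morphism `k : P ⟶ X` with `P.V` finitely generated, precomposing a
coalgebra-to-algebra morphism `X.V ⟶ A.a` with `k.f` gives the unique solution on `P`, and
finitely presentable objects detect equality of morphisms.

Existence: send `s : T ⟶ X.V`, factored as `T ⟶ P.V ⟶ X.V`, to its composite with the solution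
on `P`, and glue along a presentation of `X.V` as a filtered colimit of finitely presentable
objects. The value does not depend on the factorization, because two coalgebras over `X` both
map into the image of their coproduct, a subcoalgebra with finitely generated carrier. Its
structure map is the diagonal fill-in of a square against `H` applied to the mono into `X.V`,
which is again mono since `H` preserves non-empty monos (an empty carrier is strict initial,
and there everything is forced).

The image of `r : V₀ ⟶ Z` is the colimit of the ω-chain whose steps coequalize all pairs of
maps from finitely presentable objects that are identified in `Z`. Finitely presentable maps
into the colimit factor through a stage, so the induced map to `Z` is mono. The first leg, a
transfinite composite of such coequalizers, has the left lifting property against every map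
that is injective on maps out of finitely presentable objects; this makes it a strong epi and
keeps the image finitely generated.
-/

open CategoryTheory CategoryTheory.Limits

universe v u

namespace LFF

variable {C : Type u} [Category.{v} C]

/-- An object is finitely presentable if its hom-functor preserves filtered colimits. -/
def IsFP (X : C) : Prop :=
  ∀ (J : Type v) [SmallCategory J] [IsFiltered J] (F : J ⥤ C)
    (c : Cocone F), Nonempty (IsColimit c) →
    Nonempty (IsColimit ((coyoneda.obj (Opposite.op X)).mapCocone c))

/-- An object is finitely generated if its hom-functor preserves filtered colimits
of diagrams all of whose connecting morphisms are monomorphisms. -/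
def IsFG (X : C) : Prop :=
  ∀ (J : Type v) [SmallCategory J] [IsFiltered J] (F : J ⥤ C),
    (∀ ⦃i j : J⦄ (f : i ⟶ j), Mono (F.map f)) →
    ∀ (c : Cocone F), Nonempty (IsColimit c) →
    Nonempty (IsColimit ((coyoneda.obj (Opposite.op X)).mapCocone c))

/-- A category is locally finitely presentable if it is cocomplete, the finitely
presentable objects are essentially small, and every object is a filtered colimit
of finitely presentable objects. -/
def IsLFP (C : Type u) [Category.{v} C] : Prop :=
  HasColimits C ∧
  EssentiallySmall.{v} (ObjectProperty.FullSubcategory (fun X : C => IsFP X)) ∧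
  ∀ X : C, ∃ (J : Type v) (_ : SmallCategory J) (_ : IsFiltered J)
    (F : J ⥤ C) (c : Cocone F),
      (∀ j, IsFP (F.obj j)) ∧ Nonempty (IsColimit c) ∧ Nonempty (c.pt ≅ X)

/-- A functor is finitary if it preserves filtered colimits. -/
def IsFinitary (H : C ⥤ C) : Prop :=
  ∀ (J : Type v) [SmallCategory J] [IsFiltered J], Nonempty (PreservesColimitsOfShape J H)

/-- An object is a strict initial object if it is initial and every morphism into it
is an isomorphism. -/
def IsStrictInitial (X : C) : Prop :=
  Nonempty (IsInitial X) ∧ ∀ (Y : C) (f : Y ⟶ X), IsIso f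

/-- A monomorphism is non-empty if its domain is not a strict initial object;
a functor preserves non-empty monos if it maps them to monos. -/
def PreservesNonemptyMonos (H : C ⥤ C) : Prop :=
  ∀ ⦃X Y : C⦄ (m : X ⟶ Y), Mono m → ¬ IsStrictInitial X → Mono (H.map m)

/-- A coalgebra is locally finitely generated (lfg) if every morphism from a finitely
generated object into its carrier factors through a coalgebra homomorphism from a
coalgebra with finitely generated carrier. -/
def IsLFGCoalgebra (H : C ⥤ C) (X : Endofunctor.Coalgebra H) : Prop :=
  ∀ (S : C), IsFG S → ∀ f : S ⟶ X.V,
    ∃ (P : Endofunctor.Coalgebra H) (h : P ⟶ X) (f' : S ⟶ P.V),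
      IsFG P.V ∧ f' ≫ h.f = f

/-- An algebra is fg-iterative if every flat equation morphism `e : X ⟶ HX + A` with
`X` finitely generated has a unique solution. -/
def IsFGIterative [HasBinaryCoproducts C] (H : C ⥤ C) (A : Endofunctor.Algebra H) : Prop :=
  ∀ (X : C), IsFG X → ∀ e : X ⟶ (H.obj X ⨿ A.a),
    ∃! s : X ⟶ A.a,
      s = e ≫ coprod.map (H.map s) (𝟙 A.a) ≫ coprod.desc A.str (𝟙 A.a)

end LFF

namespace LFF

variable {C : Type u} [Category.{v} C]

section FinitelyPresentable

lemma IsFP.isFG {S : C} (h : IsFP S) : IsFG S :=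
  fun J _ _ F _ c hc => h J F c hc

lemma IsFP.exists_factor {S : C} (hS : IsFP S) {J : Type v} [SmallCategory J] [IsFiltered J]
    {F : J ⥤ C} {c : Cocone F} (hc : IsColimit c) (t : S ⟶ c.pt) :
    ∃ (j : J) (t' : S ⟶ F.obj j), t' ≫ c.ι.app j = t :=
  Types.jointly_surjective _ (hS J F c ⟨hc⟩).some t

section MonoDiagram

variable {J : Type v} [SmallCategory J] [IsFiltered J] {F : J ⥤ C}
  (hF : ∀ ⦃i j : J⦄ (f : i ⟶ j), Mono (F.map f)) {c : Cocone F} (hc : IsColimit c)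
include hF hc

lemma IsFG.exists_factor {S : C} (hS : IsFG S) (t : S ⟶ c.pt) :
    ∃ (j : J) (t' : S ⟶ F.obj j), t' ≫ c.ι.app j = t :=
  Types.jointly_surjective _ (hS J F hF c ⟨hc⟩).some t

lemma IsFG.eq_of_comp_ι_eq {S : C} (hS : IsFG S) {j : J} {a b : S ⟶ F.obj j}
    (h : a ≫ c.ι.app j = b ≫ c.ι.app j) : a = b := by
  obtain ⟨k, f, g, hfg⟩ :=
    (Types.FilteredColimit.isColimit_eq_iff _ (hS J F hF c ⟨hc⟩).some).mp h
  replace hfg : a ≫ F.map f = b ≫ F.map g := hfg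
  have hmap : F.map (f ≫ IsFiltered.coeqHom f g) = F.map (g ≫ IsFiltered.coeqHom f g) := by
    rw [IsFiltered.coeq_condition]
  rw [← cancel_mono (F.map (f ≫ IsFiltered.coeqHom f g))]
  conv_rhs => rw [hmap]
  simp only [F.map_comp, reassoc_of% hfg]

end MonoDiagram

lemma IsFG.coprod [HasBinaryCoproducts C] {P Q : C} (hP : IsFG P) (hQ : IsFG Q) :
    IsFG (P ⨿ Q) := by
  intro J _ _ F hF c ⟨hc⟩
  refine ⟨Types.FilteredColimit.isColimitOf _ _ (fun (x : P ⨿ Q ⟶ c.pt) => ?_)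
    (fun i j (xi : P ⨿ Q ⟶ F.obj i) (xj : P ⨿ Q ⟶ F.obj j) hij => ?_)⟩
  · obtain ⟨j₁, x₁, hx₁⟩ := hP.exists_factor hF hc (coprod.inl ≫ x)
    obtain ⟨j₂, x₂, hx₂⟩ := hQ.exists_factor hF hc (coprod.inr ≫ x)
    refine ⟨IsFiltered.max j₁ j₂, coprod.desc (x₁ ≫ F.map (IsFiltered.leftToMax j₁ j₂))
      (x₂ ≫ F.map (IsFiltered.rightToMax j₁ j₂)), ?_⟩
    change x = _ ≫ c.ι.app _
    apply coprod.hom_ext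
    · rw [coprod.inl_desc_assoc, Category.assoc, c.w, hx₁]
    · rw [coprod.inr_desc_assoc, Category.assoc, c.w, hx₂]
  · refine ⟨IsFiltered.max i j, IsFiltered.leftToMax i j, IsFiltered.rightToMax i j, ?_⟩
    replace hij : xi ≫ c.ι.app i = xj ≫ c.ι.app j := hij
    change xi ≫ F.map _ = xj ≫ F.map _
    ext
    · exact hP.eq_of_comp_ι_eq hF hc (by simp [hij])
    · exact hQ.eq_of_comp_ι_eq hF hc (by simp [hij])

end FinitelyPresentable

section LocallyFinitelyPresentable

def InjectiveOnFP {Y Z : C} (m : Y ⟶ Z) : Prop :=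
  ∀ ⦃T : C⦄, IsFP T → ∀ a b : T ⟶ Y, a ≫ m = b ≫ m → a = b

lemma injectiveOnFP_of_mono {Y Z : C} (m : Y ⟶ Z) [Mono m] : InjectiveOnFP m :=
  fun _ _ _ _ h => (cancel_mono m).mp h

lemma injectiveOnFP_ι {J : Type v} [SmallCategory J] [IsFiltered J] {F : J ⥤ C}
    (hF : ∀ ⦃i j : J⦄ (f : i ⟶ j), Mono (F.map f)) {c : Cocone F} (hc : IsColimit c) (j : J) :
    InjectiveOnFP (c.ι.app j) :=
  fun _ hT _ _ h => hT.isFG.eq_of_comp_ι_eq hF hc h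

lemma isFG_of_epi_of_hasLiftingProperty {V₀ V : C} (e : V₀ ⟶ V) [Epi e] (hV₀ : IsFG V₀)
    (he : ∀ ⦃Y Z : C⦄ (m : Y ⟶ Z), InjectiveOnFP m → HasLiftingProperty e m) : IsFG V := by
  intro J _ _ F hF c ⟨hc⟩
  refine ⟨Types.FilteredColimit.isColimitOf _ _ (fun (t : V ⟶ c.pt) => ?_)
    (fun i j (xi : V ⟶ F.obj i) (xj : V ⟶ F.obj j) hij => ?_)⟩
  · obtain ⟨j, t₀, ht₀⟩ := hV₀.exists_factor hF hc (e ≫ t)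
    have := he _ (injectiveOnFP_ι hF hc j)
    have sq : CommSq t₀ e (c.ι.app j) t := ⟨ht₀⟩
    exact ⟨j, sq.lift, sq.fac_right.symm⟩
  · refine ⟨IsFiltered.max i j, IsFiltered.leftToMax i j, IsFiltered.rightToMax i j, ?_⟩
    replace hij : xi ≫ c.ι.app i = xj ≫ c.ι.app j := hij
    change xi ≫ F.map _ = xj ≫ F.map _
    exact (cancel_epi e).mp (hV₀.eq_of_comp_ι_eq hF hc (by simp [hij]))

variable (hC : IsLFP C)
include hC

lemma IsLFP.exists_isColimit (Y : C) :
    ∃ (J : Type v) (_ : SmallCategory J) (_ : IsFiltered J) (F : J ⥤ C)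
      (ι : F ⟶ (Functor.const J).obj Y), (∀ j, IsFP (F.obj j)) ∧ Nonempty (IsColimit ⟨Y, ι⟩) := by
  obtain ⟨J, _, _, F, c, hFP, ⟨hc⟩, ⟨φ⟩⟩ := hC.2.2 Y
  exact ⟨J, ‹_›, ‹_›, F, (c.extend φ.hom).ι, hFP, ⟨hc.extendIso φ.hom⟩⟩

lemma IsLFP.hom_ext {Y Z : C} {f g : Y ⟶ Z}
    (h : ∀ (T : C), IsFP T → ∀ s : T ⟶ Y, s ≫ f = s ≫ g) : f = g := by
  obtain ⟨J, _, _, F, ι, hFP, ⟨hc⟩⟩ := hC.exists_isColimit Y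
  exact hc.hom_ext fun j => h _ (hFP j) (ι.app j)

lemma IsLFP.mono_of_injectiveOnFP {Y Z : C} {m : Y ⟶ Z} (hm : InjectiveOnFP m) : Mono m :=
  ⟨fun _ _ h => hC.hom_ext fun _ hT s => hm hT _ _ (by simpa using s ≫= h)⟩

lemma IsLFP.exists_hom_of_isFP {Y Z : C} (w : ∀ T : C, IsFP T → (T ⟶ Y) → (T ⟶ Z))
    (hw : ∀ (T T' : C) (hT : IsFP T) (hT' : IsFP T') (t : T' ⟶ T) (s : T ⟶ Y),
      t ≫ w T hT s = w T' hT' (t ≫ s)) :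
    ∃ u : Y ⟶ Z, ∀ (T : C) (hT : IsFP T) (s : T ⟶ Y), s ≫ u = w T hT s := by
  obtain ⟨J, _, _, F, ι, hFP, ⟨hc⟩⟩ := hC.exists_isColimit Y
  let d : Cocone F :=
    { pt := Z
      ι := { app j := w _ (hFP j) (ι.app j)
             naturality i j f := by simpa using hw _ _ (hFP j) (hFP i) (F.map f) (ι.app j) } }
  refine ⟨hc.desc d, fun T hT s => ?_⟩
  obtain ⟨j, t, rfl⟩ := hT.exists_factor hc s
  rw [Category.assoc, show ι.app j ≫ hc.desc d = d.ι.app j from hc.fac d j]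
  exact hw _ _ (hFP j) hT t (ι.app j)

lemma IsLFP.exists_fp_family :
    ∃ (K : Type v) (ob : K → C), (∀ k, IsFP (ob k)) ∧
      ∀ T : C, IsFP T → ∃ k, Nonempty (ob k ≅ T) := by
  have := hC.2.1
  let e := equivSmallModel (ObjectProperty.FullSubcategory fun X : C => IsFP X)
  exact ⟨_, fun k => (e.inverse.obj k).obj, fun k => (e.inverse.obj k).property,
    fun T hT => ⟨e.functor.obj ⟨T, hT⟩, ⟨(ObjectProperty.ι _).mapIso (e.unitIso.app ⟨T, hT⟩).symm⟩⟩⟩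

end LocallyFinitelyPresentable

section Chain

variable [HasColimits C] {F : ℕ ⥤ C}

lemma colimit_ι_succ (n : ℕ) :
    F.map (homOfLE (n.le_add_right 1)) ≫ colimit.ι F (n + 1) = colimit.ι F n :=
  colimit.w F _

lemma epi_colimit_ι_zero (hF : ∀ n : ℕ, Epi (F.map (homOfLE (n.le_add_right 1)))) :
    Epi (colimit.ι F 0) := by
  refine ⟨fun x y h => colimit.hom_ext fun n => ?_⟩
  induction n with
  | zero => exact h
  | succ n ih =>
    have := hF n
    rw [← cancel_epi (F.map (homOfLE (n.le_add_right 1))), ← Category.assoc, colimit_ι_succ, ih,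
      ← Category.assoc, colimit_ι_succ]

lemma hasLiftingProperty_colimit_ι_zero {Y Y' : C} {m : Y ⟶ Y'}
    (hF : ∀ n : ℕ, HasLiftingProperty (F.map (homOfLE (n.le_add_right 1))) m) :
    HasLiftingProperty (colimit.ι F 0) m :=
  HasLiftingProperty.transfiniteComposition.hasLiftingProperty_ι_app_bot (colimit.isColimit F)
    fun n _ => hF n

lemma IsFP.exists_factor_pair {T : C} (hT : IsFP T) (a b : T ⟶ colimit F) :
    ∃ (n : ℕ) (a' b' : T ⟶ F.obj n), a' ≫ colimit.ι F n = a ∧ b' ≫ colimit.ι F n = b := by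
  have hc := (colimit.isColimit F).whiskerEquivalence AsSmall.equiv.symm
  obtain ⟨⟨n⟩, (a' : T ⟶ F.obj n), ha'⟩ := hT.exists_factor hc a
  obtain ⟨⟨n'⟩, (b' : T ⟶ F.obj n'), hb'⟩ := hT.exists_factor hc b
  replace ha' : a' ≫ colimit.ι F n = a := ha'
  replace hb' : b' ≫ colimit.ι F n' = b := hb'
  exact ⟨max n n', a' ≫ F.map (homOfLE (le_max_left n n')),
    b' ≫ F.map (homOfLE (le_max_right n n')), by simpa using ha', by simpa using hb'⟩

lemma injectiveOnFP_of_comp_ι {Z : C} (ρ : colimit F ⟶ Z)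
    (h : ∀ (n : ℕ) (T : C), IsFP T → ∀ a b : T ⟶ F.obj n,
      a ≫ colimit.ι F n ≫ ρ = b ≫ colimit.ι F n ≫ ρ →
        a ≫ F.map (homOfLE (n.le_add_right 1)) = b ≫ F.map (homOfLE (n.le_add_right 1))) :
    InjectiveOnFP ρ := by
  intro T hT a b hab
  obtain ⟨n, a, b, rfl, rfl⟩ := hT.exists_factor_pair a b
  rw [← colimit_ι_succ, reassoc_of% h n T hT a b (by simpa using hab)]

end Chain

section Quotient

variable [HasColimits C]

lemma hasLiftingProperty_coequalizer_π {I : Type v} {src : I → C} (hsrc : ∀ i, IsFP (src i))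
    {W : C} (f g : ∀ i, src i ⟶ W) {Y Z : C} {m : Y ⟶ Z} (hm : InjectiveOnFP m) :
    HasLiftingProperty (coequalizer.π (Sigma.desc f) (Sigma.desc g)) m where
  sq_hasLift {u k} sq := by
    have hu : Sigma.desc f ≫ u = Sigma.desc g ≫ u := Sigma.hom_ext _ _ fun i => by
      have := Sigma.ι src i ≫= coequalizer.condition (Sigma.desc f) (Sigma.desc g) =≫ k
      simpa using hm (hsrc i) (f i ≫ u) (g i ≫ u) (by simpa [sq.w] using this)
    exact ⟨⟨{ l := coequalizer.desc u hu,
               fac_left := coequalizer.π_desc _ _,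
               fac_right := by
                 rw [← cancel_epi (coequalizer.π _ _), coequalizer.π_desc_assoc, sq.w] }⟩⟩

end Quotient

section Tower

variable [HasColimits C] {K : Type v} (ob : K → C) {Z : C}

/-- Pairs are taken from the small family `ob` of representatives of the finitely presentable
objects, so that the coproduct indexed by them exists. -/
structure IdentifiedPair {W : C} (r : W ⟶ Z) : Type v where
  src : K
  fst : ob src ⟶ W
  snd : ob src ⟶ W
  w : fst ≫ r = snd ≫ r

noncomputable abbrev IdentifiedPair.sigmaFst {W : C} (r : W ⟶ Z) :
    (∐ fun p : IdentifiedPair ob r => ob p.src) ⟶ W :=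
  Sigma.desc fun p => p.fst

noncomputable abbrev IdentifiedPair.sigmaSnd {W : C} (r : W ⟶ Z) :
    (∐ fun p : IdentifiedPair ob r => ob p.src) ⟶ W :=
  Sigma.desc fun p => p.snd

noncomputable def quotientTower {V₀ : C} (r₀ : V₀ ⟶ Z) : ℕ → Σ W : C, W ⟶ Z
  | 0 => ⟨V₀, r₀⟩
  | n + 1 =>
    let r := (quotientTower r₀ n).2
    ⟨_, coequalizer.desc r (Sigma.hom_ext _ _ fun p => by simpa using p.w :
      IdentifiedPair.sigmaFst ob r ≫ r = IdentifiedPair.sigmaSnd ob r ≫ r)⟩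

variable {V₀ : C} (r₀ : V₀ ⟶ Z)

noncomputable def quotientTower.π (n : ℕ) :
    (quotientTower ob r₀ n).1 ⟶ (quotientTower ob r₀ (n + 1)).1 :=
  coequalizer.π _ _

@[simp]
lemma quotientTower.π_comp (n : ℕ) :
    quotientTower.π ob r₀ n ≫ (quotientTower ob r₀ (n + 1)).2 = (quotientTower ob r₀ n).2 :=
  coequalizer.π_desc _ _

noncomputable abbrev quotientTowerDiagram : ℕ ⥤ C :=
  Functor.ofSequence (quotientTower.π ob r₀)

noncomputable def quotientTowerDesc : colimit (quotientTowerDiagram ob r₀) ⟶ Z :=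
  colimit.desc _ ⟨Z, NatTrans.ofSequence (fun n => (quotientTower ob r₀ n).2)
    fun n => by
      simp only [Functor.ofSequence_map_homOfLE_succ, Functor.const_obj_map]
      exact (quotientTower.π_comp ob r₀ n).trans (Category.comp_id _).symm⟩

@[simp]
lemma ι_quotientTowerDesc (n : ℕ) :
    colimit.ι (quotientTowerDiagram ob r₀) n ≫ quotientTowerDesc ob r₀ =
      (quotientTower ob r₀ n).2 :=
  (colimit.ι_desc _ _).trans rfl

lemma IdentifiedPair.fst_comp_π {n : ℕ} (p : IdentifiedPair ob (quotientTower ob r₀ n).2) :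
    p.fst ≫ quotientTower.π ob r₀ n = p.snd ≫ quotientTower.π ob r₀ n := by
  have h := Sigma.ι _ p ≫= coequalizer.condition (IdentifiedPair.sigmaFst ob _)
    (IdentifiedPair.sigmaSnd ob _)
  simp only [Sigma.ι_desc_assoc] at h
  exact h

lemma hasLiftingProperty_ι_zero (hob : ∀ k, IsFP (ob k)) ⦃Y Y' : C⦄ (m : Y ⟶ Y')
    (hm : InjectiveOnFP m) : HasLiftingProperty (colimit.ι (quotientTowerDiagram ob r₀) 0) m :=
  hasLiftingProperty_colimit_ι_zero fun n => by
    rw [Functor.ofSequence_map_homOfLE_succ]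
    exact hasLiftingProperty_coequalizer_π (fun p : IdentifiedPair ob _ => hob p.src) _ _ hm

lemma epi_ι_zero : Epi (colimit.ι (quotientTowerDiagram ob r₀) 0) :=
  epi_colimit_ι_zero fun n => by
    rw [Functor.ofSequence_map_homOfLE_succ]
    exact coequalizer.π_epi

variable {ob} in
lemma quotientTower.π_eq_of_comp_eq (hrep : ∀ T, IsFP T → ∃ k, Nonempty (ob k ≅ T)) {n : ℕ}
    {T : C} (hT : IsFP T) (a b : T ⟶ (quotientTower ob r₀ n).1)
    (h : a ≫ (quotientTower ob r₀ n).2 = b ≫ (quotientTower ob r₀ n).2) :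
    a ≫ quotientTower.π ob r₀ n = b ≫ quotientTower.π ob r₀ n := by
  obtain ⟨k, ⟨i⟩⟩ := hrep T hT
  rw [← cancel_epi i.hom]
  simpa using (IdentifiedPair.mk k (i.hom ≫ a) (i.hom ≫ b) (by simpa using i.hom ≫= h)).fst_comp_π

variable {ob} in
lemma mono_quotientTowerDesc (hC : IsLFP C) (hrep : ∀ T, IsFP T → ∃ k, Nonempty (ob k ≅ T)) :
    Mono (quotientTowerDesc ob r₀) :=
  hC.mono_of_injectiveOnFP <| injectiveOnFP_of_comp_ι _ fun n T hT a b h => by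
    rw [ι_quotientTowerDesc] at h
    rw [Functor.ofSequence_map_homOfLE_succ]
    exact quotientTower.π_eq_of_comp_eq r₀ hrep hT a b h

end Tower

section Image

lemma IsLFP.exists_strongEpi_mono_factorization (hC : IsLFP C) {V₀ Z : C} (r₀ : V₀ ⟶ Z)
    (hV₀ : IsFG V₀) :
    ∃ (V : C) (e : V₀ ⟶ V) (ρ : V ⟶ Z), StrongEpi e ∧ Mono ρ ∧ IsFG V ∧ e ≫ ρ = r₀ := by
  have := hC.1
  obtain ⟨K, ob, hob, hrep⟩ := hC.exists_fp_family
  have hepi := epi_ι_zero ob r₀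
  have hllp := hasLiftingProperty_ι_zero ob r₀ hob
  exact ⟨_, _, _, ⟨hepi, fun _ _ m _ => hllp m (injectiveOnFP_of_mono m)⟩,
    mono_quotientTowerDesc r₀ hC hrep, isFG_of_epi_of_hasLiftingProperty (colimit.ι _ 0) hV₀ hllp,
    ι_quotientTowerDesc ob r₀ 0⟩

end Image

section Coalgebras

variable {H : C ⥤ C}

open Endofunctor

lemma IsLFP.exists_subcoalgebra_factorization (hC : IsLFP C) (hm : PreservesNonemptyMonos H)
    {Q X : Coalgebra H} (q : Q ⟶ X) (hQ : IsFG Q.V) :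
    ∃ (R : Coalgebra H) (e : Q ⟶ R) (ρ : R ⟶ X), Mono ρ.f ∧ IsFG R.V ∧ e ≫ ρ = q := by
  obtain ⟨V, e, ρ, he, hρ, hV, hfac⟩ := hC.exists_strongEpi_mono_factorization q.f hQ
  by_cases hstrict : IsStrictInitial V
  · obtain ⟨hI⟩ := hstrict.1
    have := hstrict.2 _ e
    have hIQ : IsInitial Q.V := hI.ofIso (asIso e).symm
    exact ⟨⟨V, hI.to _⟩, ⟨e, hIQ.hom_ext _ _⟩, ⟨ρ, hI.hom_ext _ _⟩, hρ, hV, Coalgebra.Hom.ext hfac⟩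
  · have := hm ρ hρ hstrict
    have sq : CommSq (Q.str ≫ H.map e) e (H.map ρ) (ρ ≫ X.str) :=
      ⟨by rw [Category.assoc, ← H.map_comp, hfac, q.h, ← hfac, Category.assoc]⟩
    exact ⟨⟨V, sq.lift⟩, ⟨e, sq.fac_left.symm⟩, ⟨ρ, sq.fac_right⟩, hρ, hV, Coalgebra.Hom.ext hfac⟩

section Coproduct

variable [HasBinaryCoproducts C] (P Q : Coalgebra H)

noncomputable abbrev coprodCoalgebra : Coalgebra H where
  V := P.V ⨿ Q.V
  str := coprod.desc (P.str ≫ H.map coprod.inl) (Q.str ≫ H.map coprod.inr)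

@[simps]
noncomputable def coprodCoalgebra.inl : P ⟶ coprodCoalgebra P Q where
  f := coprod.inl
  h := (coprod.inl_desc _ _).symm

@[simps]
noncomputable def coprodCoalgebra.inr : Q ⟶ coprodCoalgebra P Q where
  f := coprod.inr
  h := (coprod.inr_desc _ _).symm

variable {P Q} in
@[simps]
noncomputable def coprodCoalgebra.desc {X : Coalgebra H} (f : P ⟶ X) (g : Q ⟶ X) :
    coprodCoalgebra P Q ⟶ X where
  f := coprod.desc f.f g.f
  h := by
    apply coprod.hom_ext
    · rw [coprod.inl_desc_assoc, coprod.inl_desc_assoc, Category.assoc, ← H.map_comp,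
        coprod.inl_desc, f.h]
    · rw [coprod.inr_desc_assoc, coprod.inr_desc_assoc, Category.assoc, ← H.map_comp,
        coprod.inr_desc, g.h]

end Coproduct

def IsCoalgToAlgHom (A : Algebra H) (W : Coalgebra H) (s : W.V ⟶ A.a) : Prop :=
  s = W.str ≫ H.map s ≫ A.str

lemma IsCoalgToAlgHom.comp {A : Algebra H} {W W' : Coalgebra H} (k : W ⟶ W') {s : W'.V ⟶ A.a}
    (hs : IsCoalgToAlgHom A W' s) : IsCoalgToAlgHom A W (k.f ≫ s) := by
  unfold IsCoalgToAlgHom at hs ⊢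
  conv_lhs => rw [hs, ← reassoc_of% k.h]
  simp

section Solution

variable [HasBinaryCoproducts C] {A : Algebra H} (hA : IsFGIterative H A)
include hA

lemma IsFGIterative.existsUnique (W : Coalgebra H) (hW : IsFG W.V) :
    ∃! s, IsCoalgToAlgHom A W s := by
  have key (s : W.V ⟶ A.a) : (W.str ≫ coprod.inl) ≫ coprod.map (H.map s) (𝟙 A.a) ≫
      coprod.desc A.str (𝟙 A.a) = W.str ≫ H.map s ≫ A.str := by simp [coprod.inl_desc]
  simpa only [key, IsCoalgToAlgHom] using hA W.V hW (W.str ≫ coprod.inl)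

noncomputable def IsFGIterative.solution (W : Coalgebra H) (hW : IsFG W.V) : W.V ⟶ A.a :=
  (hA.existsUnique W hW).exists.choose

lemma IsFGIterative.isCoalgToAlgHom_solution (W : Coalgebra H) (hW : IsFG W.V) :
    IsCoalgToAlgHom A W (hA.solution W hW) :=
  (hA.existsUnique W hW).exists.choose_spec

lemma IsFGIterative.eq_solution {W : Coalgebra H} (hW : IsFG W.V) {s : W.V ⟶ A.a}
    (hs : IsCoalgToAlgHom A W s) : s = hA.solution W hW :=
  (hA.existsUnique W hW).unique hs (hA.isCoalgToAlgHom_solution W hW)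

lemma IsFGIterative.comp_solution {W W' : Coalgebra H} (hW : IsFG W.V) (hW' : IsFG W'.V)
    (k : W ⟶ W') : k.f ≫ hA.solution W' hW' = hA.solution W hW :=
  hA.eq_solution hW ((hA.isCoalgToAlgHom_solution W' hW').comp k)

variable (hC : IsLFP C) (hm : PreservesNonemptyMonos H)
include hC hm

lemma IsFGIterative.comp_solution_eq {X P P' : Coalgebra H} (hP : IsFG P.V) (hP' : IsFG P'.V)
    (h : P ⟶ X) (h' : P' ⟶ X) {S : C} (a : S ⟶ P.V) (b : S ⟶ P'.V) (hab : a ≫ h.f = b ≫ h'.f) :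
    a ≫ hA.solution P hP = b ≫ hA.solution P' hP' := by
  obtain ⟨R, e, ρ, hρ, hR, hfac⟩ :=
    hC.exists_subcoalgebra_factorization hm (coprodCoalgebra.desc h h') (hP.coprod hP')
  have hab' : a ≫ coprod.inl ≫ e.f = b ≫ coprod.inr ≫ e.f := by
    rw [← cancel_mono ρ.f]
    simpa [← Coalgebra.comp_f, hfac, coprod.inl_desc, coprod.inr_desc] using hab
  rw [← hA.comp_solution hP hR (coprodCoalgebra.inl P P' ≫ e),
    ← hA.comp_solution hP' hR (coprodCoalgebra.inr P P' ≫ e)]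
  simpa using hab' =≫ hA.solution R hR

lemma IsFGIterative.exists_comp_eq_solution {X : Coalgebra H} (hX : IsLFGCoalgebra H X) :
    ∃ u : X.V ⟶ A.a,
      ∀ (P : Coalgebra H) (hP : IsFG P.V) (h : P ⟶ X), h.f ≫ u = hA.solution P hP := by
  choose P h f hP hfac using fun (T : C) (hT : IsFP T) (s : T ⟶ X.V) => hX T hT.isFG s
  obtain ⟨u, hu⟩ := hC.exists_hom_of_isFP (fun T hT s => f T hT s ≫ hA.solution _ (hP T hT s))
    fun T T' hT hT' t s => by
      rw [← Category.assoc]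
      exact hA.comp_solution_eq hC hm _ _ _ _ _ _ (by rw [Category.assoc, hfac, hfac])
  refine ⟨u, fun Q hQ k => hC.hom_ext fun T hT s => ?_⟩
  rw [← Category.assoc, hu _ hT]
  exact hA.comp_solution_eq hC hm _ _ _ k _ _ (hfac T hT _)

end Solution

section LFGCoalgebra

variable {A : Algebra H} (hC : IsLFP C) {X : Coalgebra H} (hX : IsLFGCoalgebra H X)
include hC hX

lemma IsLFGCoalgebra.hom_ext {Y : C} {y y' : X.V ⟶ Y}
    (h : ∀ (P : Coalgebra H), IsFG P.V → ∀ k : P ⟶ X, k.f ≫ y = k.f ≫ y') : y = y' :=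
  hC.hom_ext fun T hT s => by
    obtain ⟨P, k, f, hP, rfl⟩ := hX T hT.isFG s
    simp only [Category.assoc, h P hP k]

lemma IsLFGCoalgebra.isCoalgToAlgHom {u : X.V ⟶ A.a}
    (hu : ∀ (P : Coalgebra H), IsFG P.V → ∀ k : P ⟶ X, IsCoalgToAlgHom A P (k.f ≫ u)) :
    IsCoalgToAlgHom A X u :=
  hC.hom_ext fun T hT s => by
    obtain ⟨P, k, f, hP, rfl⟩ := hX T hT.isFG s
    rw [Category.assoc, Category.assoc, hu P hP k, H.map_comp, Category.assoc, reassoc_of% k.h]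

end LFGCoalgebra

end Coalgebras

end LFF

open LFF in
theorem stmt17_general {C : Type u} [Category.{v} C] [HasBinaryCoproducts C] (hC : IsLFP C)
    (H : C ⥤ C) (hm : PreservesNonemptyMonos H)
    (A : Endofunctor.Algebra H) (hA : IsFGIterative H A)
    (X : Endofunctor.Coalgebra H) (hX : IsLFGCoalgebra H X) :
    ∃! u : X.V ⟶ A.a, u = X.str ≫ H.map u ≫ A.str := by
  obtain ⟨u, hu⟩ := hA.exists_comp_eq_solution hC hm hX
  refine ⟨u, hX.isCoalgToAlgHom hC fun P hP k => ?_, fun y hy => hX.hom_ext hC fun P hP k => ?_⟩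
  · rw [hu P hP k]
    exact hA.isCoalgToAlgHom_solution P hP
  · rw [hu P hP k]
    exact hA.eq_solution hP (IsCoalgToAlgHom.comp k hy)

open LFF in
/-- Every lfg coalgebra admits a unique coalgebra-to-algebra morphism into any
fg-iterative algebra. -/
theorem stmt17 {C : Type u} [Category.{v} C] [HasBinaryCoproducts C] (hC : IsLFP C)
    (H : C ⥤ C) (hfin : IsFinitary H) (hm : PreservesNonemptyMonos H)
    (A : Endofunctor.Algebra H) (hA : IsFGIterative H A)
    (X : Endofunctor.Coalgebra H) (hX : IsLFGCoalgebra H X) :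
    ∃! u : X.V ⟶ A.a, u = X.str ≫ H.map u ≫ A.str :=
  stmt17_general hC H hm A hA X hX
end

section
/- Assume additionally that every finitely presentable object of C is a strong quotient of a finitely presentable projective object and that H preserves strong epimorphisms. Then every H-coalgebra with finitely generated carrier is a strong quotient (in Coalg H) of a coalgebra with finitely presentable carrier. -/
open CategoryTheory CategoryTheory.Limits

universe v u

open LFF in
/-- An object is projective (w.r.t. strong epis) if morphisms out of it lift along
strong epimorphisms. -/
def LFF.IsStrongProjective {C : Type u} [Category.{v} C] (P : C) : Prop :=
  ∀ ⦃A B : C⦄ (e : A ⟶ B), StrongEpi e → ∀ f : P ⟶ B, ∃ f' : P ⟶ A, f' ≫ e = f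

/-!
A finitely generated `X` is a strong quotient of a finitely presentable object: factor the legs
`Xᵢ → X` of a presentation of `X` as a filtered colimit of finitely presentable objects into strong
epis followed by monos; the monos form a filtered diagram of subobjects with colimit `X`, so finite
generation makes one of them invertible. Covering that finitely presentable object by a finitely
presentable projective `P`, we get a strong epi `q : P ↠ X`; as `H q` is again a strong epi,
projectivity lifts `q ≫ X.str` along `H q` to a coalgebra structure on `P` making `q` a
homomorphism.

Strong epi–mono factorisations exist in a locally finitely presentable category: given `f : A → X`,
repeatedly coequalise all pairs of maps out of finitely presentable objects that are identified
over `X`. The colimit of this ω-chain of regular epis maps monomorphically to `X`, because a pair of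
maps out of a finitely presentable object into the colimit factors through a finite stage, and is
coequalised at the next one.
-/

namespace LFF

variable {C : Type u} [Category.{v} C]

section Sequence

variable {F : ℕ ⥤ C} {c : Cocone F} (hc : IsColimit c)
include hc

lemma epi_ι_zero_of_epi_map_succ (hF : ∀ n : ℕ, Epi (F.map (homOfLE n.le_succ))) :
    Epi (c.ι.app 0) := by
  refine ⟨fun {Z} a b hab => hc.hom_ext fun n => ?_⟩
  induction n with
  | zero => exact hab
  | succ n ih =>
    rw [← c.w (homOfLE n.le_succ), Category.assoc, Category.assoc] at ih
    exact (cancel_epi _).1 ih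

lemma strongEpi_ι_zero_of_strongEpi_map_succ
    (hF : ∀ n : ℕ, StrongEpi (F.map (homOfLE n.le_succ))) : StrongEpi (c.ι.app 0) where
  epi := epi_ι_zero_of_epi_map_succ hc fun n => (hF n).epi
  llp _ _ z _ :=
    HasLiftingProperty.transfiniteComposition.hasLiftingProperty_ι_app_bot hc
      fun n _ => (hF n).llp z

end Sequence

lemma IsFP.exists_common_factorization {T : C} (hT : IsFP T) {J : Type v} [SmallCategory J]
    [IsFiltered J] {F : J ⥤ C} {c : Cocone F} (hc : IsColimit c) (u v : T ⟶ c.pt) :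
    ∃ (j : J) (u' v' : T ⟶ F.obj j), u' ≫ c.ι.app j = u ∧ v' ≫ c.ι.app j = v := by
  obtain ⟨hTc⟩ := hT J F c ⟨hc⟩
  obtain ⟨i, u', hu⟩ := Types.jointly_surjective_of_isColimit hTc u
  obtain ⟨k, v', hv⟩ := Types.jointly_surjective_of_isColimit hTc v
  refine ⟨IsFiltered.max i k, u' ≫ F.map (IsFiltered.leftToMax i k),
    v' ≫ F.map (IsFiltered.rightToMax i k), ?_, ?_⟩
  · simpa using hu
  · simpa using hv

lemma IsFP.exists_common_factorization_of_nat {T : C} (hT : IsFP T) {F : ℕ ⥤ C} {c : Cocone F}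
    (hc : IsColimit c) (u v : T ⟶ c.pt) :
    ∃ (n : ℕ) (u' v' : T ⟶ F.obj n), u' ≫ c.ι.app n = u ∧ v' ≫ c.ι.app n = v := by
  -- `IsFP` only tests diagrams indexed by `Type v`, hence the detour through `ULift ℕ`.
  obtain ⟨⟨n⟩, u', v', hu, hv⟩ :=
    hT.exists_common_factorization (hc.whiskerEquivalence ULift.orderIso.{v}.equivalence) u v
  exact ⟨n, u', v', hu, hv⟩

lemma IsLFP.mono_of_isFP_cancel (hC : IsLFP C) {Y X : C} (m : Y ⟶ X)
    (hm : ∀ T : C, IsFP T → ∀ u v : T ⟶ Y, u ≫ m = v ≫ m → u = v) : Mono m := by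
  refine ⟨fun {Z} u v huv => ?_⟩
  obtain ⟨J, _, _, F, c, hF, ⟨hc⟩, ⟨ψ⟩⟩ := hC.2.2 Z
  refine (cancel_epi ψ.hom).1 (hc.hom_ext fun j => ?_)
  simpa using hm _ (hF j) (c.ι.app j ≫ ψ.hom ≫ u) (c.ι.app j ≫ ψ.hom ≫ v) (by simp [huv])

lemma IsLFP.exists_isFP_representatives (hC : IsLFP C) :
    ∃ (S : Type v) (T : S → C), ∀ X : C, IsFP X → ∃ s, Nonempty (X ≅ T s) := by
  obtain ⟨S, _, ⟨E⟩⟩ := hC.2.1.equiv_smallCategory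
  exact ⟨S, fun s => (E.inverse.obj s).obj, fun X hX =>
    ⟨E.functor.obj ⟨X, hX⟩, ⟨(ObjectProperty.ι _).mapIso (E.unitIso.app ⟨X, hX⟩)⟩⟩⟩

section CoequalizePairs

variable [HasColimits C] {S : Type v} (T : S → C) {X : C}

def EqualizedPairs (y : Over X) : Type v :=
  Σ s : S, { p : (T s ⟶ y.left) × (T s ⟶ y.left) // p.1 ≫ y.hom = p.2 ≫ y.hom }

namespace EqualizedPairs

variable (y : Over X)

noncomputable def fst : (∐ fun k : EqualizedPairs T y => T k.1) ⟶ y.left :=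
  Sigma.desc fun k => k.2.1.1

noncomputable def snd : (∐ fun k : EqualizedPairs T y => T k.1) ⟶ y.left :=
  Sigma.desc fun k => k.2.1.2

lemma fst_comp_hom : fst T y ≫ y.hom = snd T y ≫ y.hom :=
  Sigma.hom_ext _ _ fun k => by simpa [fst, snd] using k.2.2

end EqualizedPairs

noncomputable def coequalizePairs (y : Over X) : Over X :=
  Over.mk (coequalizer.desc y.hom (EqualizedPairs.fst_comp_hom T y))

noncomputable def toCoequalizePairs (y : Over X) : y ⟶ coequalizePairs T y :=
  Over.homMk (coequalizer.π _ _) (coequalizer.π_desc _ _)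

lemma strongEpi_toCoequalizePairs_left (y : Over X) :
    StrongEpi (toCoequalizePairs T y).left :=
  inferInstanceAs (StrongEpi (coequalizer.π _ _))

lemma toCoequalizePairs_left_eq (y : Over X) {Z : C} {s : S} (ψ : Z ≅ T s) (u v : Z ⟶ y.left)
    (h : u ≫ y.hom = v ≫ y.hom) :
    u ≫ (toCoequalizePairs T y).left = v ≫ (toCoequalizePairs T y).left := by
  have h' := Sigma.ι (fun k : EqualizedPairs T y => T k.1)
      ⟨s, (ψ.inv ≫ u, ψ.inv ≫ v), by simp [h]⟩ ≫=
    coequalizer.condition (EqualizedPairs.fst T y) (EqualizedPairs.snd T y)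
  simp [EqualizedPairs.fst, EqualizedPairs.snd] at h'
  exact h'

noncomputable def coequalizePairsIter (y : Over X) : ℕ → Over X
  | 0 => y
  | n + 1 => coequalizePairs T (coequalizePairsIter y n)

noncomputable def coequalizePairsChain (y : Over X) : ℕ ⥤ C :=
  Functor.ofSequence fun n => (toCoequalizePairs T (coequalizePairsIter T y n)).left

lemma coequalizePairsChain_map_succ (y : Over X) (n : ℕ) :
    (coequalizePairsChain T y).map (homOfLE n.le_succ) =
      (toCoequalizePairs T (coequalizePairsIter T y n)).left :=
  Functor.ofSequence_map_homOfLE_succ _ n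

noncomputable def coequalizePairsChainDesc (y : Over X) :
    colimit (coequalizePairsChain T y) ⟶ X :=
  colimit.desc _ ⟨X, NatTrans.ofSequence (fun n => (coequalizePairsIter T y n).hom) fun n => by
    rw [coequalizePairsChain_map_succ]
    exact (Over.w _).trans (Category.comp_id _).symm⟩

lemma ι_coequalizePairsChainDesc (y : Over X) (n : ℕ) :
    colimit.ι (coequalizePairsChain T y) n ≫ coequalizePairsChainDesc T y =
      (coequalizePairsIter T y n).hom :=
  colimit.ι_desc _ _

lemma strongEpi_ι_zero_coequalizePairsChain (y : Over X) :
    StrongEpi (colimit.ι (coequalizePairsChain T y) 0) :=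
  strongEpi_ι_zero_of_strongEpi_map_succ (colimit.isColimit _) fun n => by
    rw [coequalizePairsChain_map_succ]
    exact strongEpi_toCoequalizePairs_left T _

lemma mono_coequalizePairsChainDesc (hC : IsLFP C)
    (hT : ∀ Z : C, IsFP Z → ∃ s, Nonempty (Z ≅ T s)) (y : Over X) :
    Mono (coequalizePairsChainDesc T y) := by
  refine hC.mono_of_isFP_cancel _ fun Z hZ u v huv => ?_
  obtain ⟨n, u, v, rfl, rfl⟩ := hZ.exists_common_factorization_of_nat (colimit.isColimit _) u v
  obtain ⟨s, ⟨ψ⟩⟩ := hT Z hZ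
  have hstep : u ≫ (coequalizePairsChain T y).map (homOfLE n.le_succ) =
      v ≫ (coequalizePairsChain T y).map (homOfLE n.le_succ) := by
    rw [coequalizePairsChain_map_succ]
    simp only [colimit.cocone_ι, Category.assoc, ι_coequalizePairsChainDesc] at huv
    exact toCoequalizePairs_left_eq T _ ψ u v huv
  simp only [colimit.cocone_ι, ← colimit.w _ (homOfLE n.le_succ), reassoc_of% hstep]

end CoequalizePairs

theorem IsLFP.hasStrongEpiMonoFactorisations (hC : IsLFP C) :
    HasStrongEpiMonoFactorisations C := by
  have := hC.1
  obtain ⟨S, T, hT⟩ := hC.exists_isFP_representatives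
  exact .mk fun f =>
    { I := _
      m := coequalizePairsChainDesc T (Over.mk f)
      m_mono := mono_coequalizePairsChainDesc T hC hT (Over.mk f)
      e := _
      e_strong_epi := strongEpi_ι_zero_coequalizePairsChain T (Over.mk f)
      fac := ι_coequalizePairsChainDesc T (Over.mk f) 0 }

noncomputable def isColimitOfPrecomposeEpi {J : Type*} [Category J] {F G : J ⥤ C} (α : F ⟶ G)
    [∀ j, Epi (α.app j)] {s : Cocone G} (hs : IsColimit ((Cocone.precompose α).obj s)) :
    IsColimit s where
  desc t := hs.desc ((Cocone.precompose α).obj t)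
  fac t j := (cancel_epi (α.app j)).1 (by simpa using hs.fac ((Cocone.precompose α).obj t) j)
  uniq t g h := hs.uniq ((Cocone.precompose α).obj t) g fun j => by simp [h]

lemma IsFG.exists_isIso_arrow_of_isColimit {X : C} (hX : IsFG X) {J : Type v} [SmallCategory J]
    [IsFiltered J] (G : J ⥤ MonoOver X)
    (hG : IsColimit ((Over.forgetCocone X).whisker (G ⋙ MonoOver.forget X))) :
    ∃ j, IsIso (G.obj j).arrow := by
  obtain ⟨hGX⟩ := hX J ((G ⋙ MonoOver.forget X) ⋙ Over.forget X)
    (fun _ _ g => (mono_of_mono_fac (MonoOver.w (G.map g)) : Mono (G.map g).hom.left)) _ ⟨hG⟩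
  obtain ⟨j, y, hy⟩ := Types.jointly_surjective_of_isColimit hGX (𝟙 X)
  have : IsSplitEpi (G.obj j).arrow := ⟨⟨⟨y, hy⟩⟩⟩
  exact ⟨j, isIso_of_mono_of_isSplitEpi _⟩

lemma IsFG.exists_strongEpi_ι [HasStrongEpiMonoFactorisations C] {J : Type v} [SmallCategory J]
    [IsFiltered J] {F : J ⥤ C} {c : Cocone F} (hc : IsColimit c) (hX : IsFG c.pt) :
    ∃ j, StrongEpi (c.ι.app j) := by
  let D : J ⥤ Over c.pt := c.toCostructuredArrow ⋙ CostructuredArrow.toOver _ _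
  let α : F ⟶ (D ⋙ MonoOver.image ⋙ MonoOver.forget _) ⋙ Over.forget _ :=
    Functor.whiskerRight (Functor.whiskerLeft D MonoOver.imageForgetAdj.unit) (Over.forget _)
  have hα (j : J) : α.app j = factorThruImage (c.ι.app j) := by
    simp [α, D, MonoOver.imageForgetAdj]
    exact Category.comp_id _
  have (j : J) : Epi (α.app j) := by
    rw [hα]
    exact (inferInstance : Epi (factorThruImage (c.ι.app j)))
  obtain ⟨j, hj⟩ := hX.exists_isIso_arrow_of_isColimit (D ⋙ MonoOver.image)
    (isColimitOfPrecomposeEpi α (hc.ofIsoColimit (Cocone.ext (Iso.refl _) fun j =>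
      (Category.comp_id _).trans ((image.fac _).symm.trans (hα j ▸ rfl)))))
  have : IsIso (image.ι (c.ι.app j)) := hj
  exact ⟨j, image.fac (c.ι.app j) ▸ strongEpi_comp _ _⟩

lemma IsLFP.exists_isFP_strongEpi_of_isFG (hC : IsLFP C) {X : C} (hX : IsFG X) :
    ∃ (V : C) (q : V ⟶ X), IsFP V ∧ StrongEpi q := by
  have := hC.hasStrongEpiMonoFactorisations
  obtain ⟨J, _, _, F, c, hF, ⟨hc⟩, ⟨ψ⟩⟩ := hC.2.2 X
  obtain ⟨j, hj⟩ := IsFG.exists_strongEpi_ι (hc.extendIso ψ.hom) hX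
  exact ⟨F.obj j, _, hF j, hj⟩

end LFF

open LFF in
theorem stmt19_general {C : Type u} [Category.{v} C] (hC : IsLFP C)
    (H : C ⥤ C)
    (hproj : ∀ X : C, IsFP X →
      ∃ (P : C) (q : P ⟶ X), IsFP P ∧ LFF.IsStrongProjective P ∧ StrongEpi q)
    (hse : ∀ ⦃X Y : C⦄ (f : X ⟶ Y), StrongEpi f → StrongEpi (H.map f))
    (X : Endofunctor.Coalgebra H) (hX : IsFG X.V) :
    ∃ (P : Endofunctor.Coalgebra H) (q : P ⟶ X), IsFP P.V ∧ StrongEpi q.f := by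
  obtain ⟨V, q, hV, hq⟩ := hC.exists_isFP_strongEpi_of_isFG hX
  obtain ⟨P, p, hP, hPproj, hp⟩ := hproj V hV
  have hpq : StrongEpi (p ≫ q) := strongEpi_comp p q
  obtain ⟨str, hstr⟩ := hPproj _ (hse _ hpq) ((p ≫ q) ≫ X.str)
  exact ⟨⟨P, str⟩, ⟨p ≫ q, hstr⟩, hP, hpq⟩

open LFF in
/-- If every fp object is a strong quotient of an fp projective object and `H`
preserves strong epis, then every coalgebra with fg carrier is a strong quotient
(in the category of coalgebras) of a coalgebra with fp carrier. -/
theorem stmt19 {C : Type u} [Category.{v} C] (hC : IsLFP C)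
    (H : C ⥤ C) (hfin : IsFinitary H) (hm : PreservesNonemptyMonos H)
    (hproj : ∀ X : C, IsFP X →
      ∃ (P : C) (q : P ⟶ X), IsFP P ∧ LFF.IsStrongProjective P ∧ StrongEpi q)
    (hse : ∀ ⦃X Y : C⦄ (f : X ⟶ Y), StrongEpi f → StrongEpi (H.map f))
    (X : Endofunctor.Coalgebra H) (hX : IsFG X.V) :
    ∃ (P : Endofunctor.Coalgebra H) (q : P ⟶ X), IsFP P.V ∧ StrongEpi q.f :=
  stmt19_general hC H hproj hse X hX
end
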